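/- Chain rule for top-down differentiation in a DAG circuit: for any non-root node j of a sum-product circuit, D_j := ∂V_root/∂V_j = Σ_{k ∈ parents(j)} [ w_{k,j} D_k if k is a sum node; D_k ∏_{j' ∈ Ch(k), j' ≠ j} V_{j'} if k is a product node ], assuming the circuit is decomposable (so each V_j appears with degree at most 1 in every V_k). -/

import Mathlib

open scoped Classical

/-- The kind of a node in a sum-product network. -/
inductive NodeKind | sum | prod | leaf
deriving DecidableEq

/-- A sum-product network (SPN) over variables `X_1, …, X_n`: a rooted DAG with `N` nodes
(indexed so that edges go from larger to smaller indices), where each node is a sum node,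
a product node, or a leaf labelled with a variable, and sum edges carry weights. -/
structure SPN (N n : ℕ) where
  kind : Fin N → NodeKind
  children : Fin N → Finset (Fin N)
  var : Fin N → Fin n
  root : Fin N
  child_lt : ∀ k, ∀ j ∈ children k, j < k
  leaf_iff : ∀ k, kind k = NodeKind.leaf ↔ children k = ∅

namespace SPN

variable {N n : ℕ}

/-- Recursive evaluation of an SPN: leaves return their given values, product nodes multiply
their children's values, sum nodes take weighted sums of their children's values. -/
noncomputable def value (S : SPN N n) (leaf : Fin N → ℝ) (w : Fin N → Fin N → ℝ) :
    Fin N → ℝ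
  | k =>
    match S.kind k with
    | NodeKind.leaf => leaf k
    | NodeKind.prod => ∏ j ∈ (S.children k).attach, value S leaf w j.1
    | NodeKind.sum => ∑ j ∈ (S.children k).attach, w k j.1 * value S leaf w j.1
  termination_by k => (k : ℕ)
  decreasing_by all_goals exact S.child_lt _ _ j.2

/-- Evaluation where the value of the node `k₀` is overridden by the free value `t`
(used to differentiate the root value with respect to the value of node `k₀`). -/
noncomputable def valueAt (S : SPN N n) (leaf : Fin N → ℝ) (w : Fin N → Fin N → ℝ)
    (k₀ : Fin N) (t : ℝ) : Fin N → ℝ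
  | k =>
    if k = k₀ then t else
      match S.kind k with
      | NodeKind.leaf => leaf k
      | NodeKind.prod => ∏ j ∈ (S.children k).attach, valueAt S leaf w k₀ t j.1
      | NodeKind.sum => ∑ j ∈ (S.children k).attach, w k j.1 * valueAt S leaf w k₀ t j.1
  termination_by k => (k : ℕ)
  decreasing_by all_goals exact S.child_lt _ _ j.2

/-- The scope of a node: the set of variables appearing below it. -/
noncomputable def scope (S : SPN N n) : Fin N → Finset (Fin n)
  | k =>
    match S.kind k with
    | NodeKind.leaf => {S.var k}
    | _ => (S.children k).attach.biUnion (fun j => scope S j.1)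
  termination_by k => (k : ℕ)
  decreasing_by all_goals exact S.child_lt _ _ j.2

/-- An SPN is complete if all children of a sum node have the same scope. -/
def Complete (S : SPN N n) : Prop :=
  ∀ k, S.kind k = NodeKind.sum →
    ∀ j₁ ∈ S.children k, ∀ j₂ ∈ S.children k, S.scope j₁ = S.scope j₂

/-- An SPN is decomposable if distinct children of a product node have disjoint scopes. -/
def Decomposable (S : SPN N n) : Prop :=
  ∀ k, S.kind k = NodeKind.prod →
    ∀ j₁ ∈ S.children k, ∀ j₂ ∈ S.children k, j₁ ≠ j₂ →
      Disjoint (S.scope j₁) (S.scope j₂)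

/-- `(TV, TE)` is an induced tree of the SPN `S`: it contains the root; its edges are edges of
`S` between its nodes; every sum node in it has exactly one outgoing edge in it; every product
node in it keeps all its outgoing edges; and every non-root node in it is the endpoint of one
of its edges. -/
def IsInducedTree (S : SPN N n) (TV : Finset (Fin N)) (TE : Finset (Fin N × Fin N)) : Prop :=
  S.root ∈ TV ∧
  (∀ e ∈ TE, e.1 ∈ TV ∧ e.2 ∈ TV ∧ e.2 ∈ S.children e.1) ∧
  (∀ k ∈ TV, S.kind k = NodeKind.sum → ∃! j, j ∈ S.children k ∧ (k, j) ∈ TE) ∧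
  (∀ k ∈ TV, S.kind k = NodeKind.prod → ∀ j ∈ S.children k, (k, j) ∈ TE) ∧
  (∀ k ∈ TV, k ≠ S.root → ∃ e ∈ TE, e.2 = k)

end SPN

/-!
Let `D` be the matrix of derivatives `∂V_m/∂V_x` and `L` the local Jacobian of the circuit,
`L k c = ∂V_k/∂V_c` for each edge `k → c`. The derivatives are taken at `t = V_x`, where
overriding node `x` changes no value; so at a product node the product rule yields exactly the
products of the sibling values. Differentiating the recursive evaluation top-down gives
`D = 1 + L * D`, i.e. `(1 - L) * D = 1`. A one-sided inverse of a square matrix is two-sided,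
hence `D * (1 - L) = 1`, i.e. `D = 1 + D * L`, and entry `(root, j)` of this identity is the
chain rule.
-/

namespace SPN

variable {N n : ℕ} (S : SPN N n) (leaf : Fin N → ℝ) (w : Fin N → Fin N → ℝ)

noncomputable def evalNode (v : Fin N → ℝ) (k : Fin N) : ℝ :=
  match S.kind k with
  | .leaf => leaf k
  | .prod => ∏ c ∈ S.children k, v c
  | .sum => ∑ c ∈ S.children k, w k c * v c

/-- Entry `(k, c)` is `∂(evalNode v k)/∂(v c)`. -/
noncomputable def localJacobian (v : Fin N → ℝ) : Matrix (Fin N) (Fin N) ℝ :=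
  Matrix.of fun k c =>
    if c ∈ S.children k then
      match S.kind k with
      | .leaf => 0
      | .prod => ∏ c' ∈ (S.children k).erase c, v c'
      | .sum => w k c
    else 0

/-- Entry `(m, x)` is `∂V_m/∂V_x`, taken at the actual value of node `x`. -/
noncomputable def derivMatrix : Matrix (Fin N) (Fin N) ℝ :=
  Matrix.of fun m x => deriv (fun t => S.valueAt leaf w x t m) (S.value leaf w x)

variable {S leaf w}

theorem value_eq_evalNode (k : Fin N) :
    S.value leaf w k = S.evalNode leaf w (S.value leaf w) k := by
  rw [value]
  cases hk : S.kind k <;>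
    simp only [evalNode, hk, Finset.sum_attach (S.children k) (fun c => w k c * S.value leaf w c),
      Finset.prod_attach (S.children k) (S.value leaf w)]

theorem valueAt_eq_evalNode (x : Fin N) (t : ℝ) (k : Fin N) :
    S.valueAt leaf w x t k = if k = x then t else S.evalNode leaf w (S.valueAt leaf w x t) k := by
  rw [valueAt]
  split_ifs
  · rfl
  cases hk : S.kind k <;>
    simp only [evalNode, hk,
      Finset.sum_attach (S.children k) (fun c => w k c * S.valueAt leaf w x t c),
      Finset.prod_attach (S.children k) (S.valueAt leaf w x t)]

theorem valueAt_self (x : Fin N) (t : ℝ) : S.valueAt leaf w x t x = t := by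
  simp [valueAt_eq_evalNode x t x]

theorem evalNode_congr {v v' : Fin N → ℝ} {k : Fin N} (h : ∀ c ∈ S.children k, v c = v' c) :
    S.evalNode leaf w v k = S.evalNode leaf w v' k := by
  unfold evalNode
  cases S.kind k
  · exact Finset.sum_congr rfl fun c hc => by rw [h c hc]
  · exact Finset.prod_congr rfl h
  · rfl

theorem valueAt_of_lt {x k : Fin N} (t : ℝ) (hk : k < x) :
    S.valueAt leaf w x t k = S.value leaf w k := by
  induction k using WellFoundedLT.induction with
  | _ k ih =>
    rw [valueAt_eq_evalNode, if_neg hk.ne, value_eq_evalNode]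
    exact evalNode_congr fun c hc => ih c (S.child_lt k c hc) ((S.child_lt k c hc).trans hk)

theorem valueAt_value (x k : Fin N) :
    S.valueAt leaf w x (S.value leaf w x) k = S.value leaf w k := by
  induction k using WellFoundedLT.induction with
  | _ k ih =>
    rw [valueAt_eq_evalNode]
    split_ifs with hkx
    · rw [hkx]
    · conv_rhs => rw [value_eq_evalNode]
      exact evalNode_congr fun c hc => ih c (S.child_lt k c hc)

theorem hasDerivAt_evalNode {f : ℝ → Fin N → ℝ} {f' : Fin N → ℝ} {t₀ : ℝ} {k : Fin N}
    (hf : ∀ c ∈ S.children k, HasDerivAt (fun t => f t c) (f' c) t₀) :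
    HasDerivAt (fun t => S.evalNode leaf w (f t) k)
      ((S.localJacobian w (f t₀)).mulVec f' k) t₀ := by
  unfold evalNode
  cases hk : S.kind k
  · refine (HasDerivAt.fun_sum fun c hc => (hf c hc).const_mul (w k c)).congr_deriv ?_
    simp [Matrix.mulVec, dotProduct, localJacobian, hk, ite_mul, Finset.sum_ite_mem]
  · refine (HasDerivAt.fun_finsetProd hf).congr_deriv ?_
    simp [Matrix.mulVec, dotProduct, localJacobian, hk, Finset.sum_ite_mem, mul_comm]
  · simpa [Matrix.mulVec, dotProduct, localJacobian, hk] using hasDerivAt_const t₀ (leaf k)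

theorem differentiableAt_valueAt (x k : Fin N) (t₀ : ℝ) :
    DifferentiableAt ℝ (fun t => S.valueAt leaf w x t k) t₀ := by
  induction k using WellFoundedLT.induction with
  | _ k ih =>
    by_cases hkx : k = x
    · subst hkx
      simp only [valueAt_self]
      exact differentiableAt_id
    · have hk : (fun t => S.valueAt leaf w x t k) =
          fun t => S.evalNode leaf w (S.valueAt leaf w x t) k :=
        funext fun t => by rw [valueAt_eq_evalNode, if_neg hkx]
      rw [hk]
      exact (hasDerivAt_evalNode fun c hc => (ih c (S.child_lt k c hc)).hasDerivAt).differentiableAt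

theorem derivMatrix_apply_self (x : Fin N) : S.derivMatrix leaf w x x = 1 := by
  simp [derivMatrix, valueAt_self]

theorem derivMatrix_apply_of_lt {m x : Fin N} (h : m < x) : S.derivMatrix leaf w m x = 0 := by
  simp [derivMatrix, valueAt_of_lt _ h]

theorem derivMatrix_apply_of_ne {m x : Fin N} (h : m ≠ x) :
    S.derivMatrix leaf w m x = (S.localJacobian w (S.value leaf w) * S.derivMatrix leaf w) m x := by
  have hm : (fun t => S.valueAt leaf w x t m) =
      fun t => S.evalNode leaf w (S.valueAt leaf w x t) m :=
    funext fun t => by rw [valueAt_eq_evalNode, if_neg h]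
  have hd : HasDerivAt (fun t => S.evalNode leaf w (S.valueAt leaf w x t) m) _ (S.value leaf w x) :=
    hasDerivAt_evalNode fun c _ => (differentiableAt_valueAt x c _).hasDerivAt
  rw [funext (valueAt_value x)] at hd
  rw [derivMatrix, Matrix.of_apply, hm, hd.deriv]
  rfl

theorem derivMatrix_eq_one_add_localJacobian_mul :
    S.derivMatrix leaf w = 1 + S.localJacobian w (S.value leaf w) * S.derivMatrix leaf w := by
  ext m x
  rcases eq_or_ne m x with rfl | h
  · have : (S.localJacobian w (S.value leaf w) * S.derivMatrix leaf w) m m = 0 := by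
      refine Matrix.mul_apply.trans (Finset.sum_eq_zero fun c _ => ?_)
      by_cases hc : c ∈ S.children m
      · rw [derivMatrix_apply_of_lt (S.child_lt m c hc), mul_zero]
      · simp [localJacobian, hc]
    simp [derivMatrix_apply_self, this]
  · rw [Matrix.add_apply, Matrix.one_apply_ne h, zero_add, derivMatrix_apply_of_ne h]

theorem derivMatrix_eq_one_add_mul_localJacobian :
    S.derivMatrix leaf w = 1 + S.derivMatrix leaf w * S.localJacobian w (S.value leaf w) := by
  have forward : (1 - S.localJacobian w (S.value leaf w)) * S.derivMatrix leaf w = 1 := by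
    rw [sub_mul, one_mul, sub_eq_iff_eq_add]
    exact derivMatrix_eq_one_add_localJacobian_mul
  have backward := mul_eq_one_comm.mp forward
  rw [mul_sub, mul_one, sub_eq_iff_eq_add] at backward
  exact backward

end SPN

theorem SPN.backprop_chain_rule_general {N n : ℕ} (S : SPN N n)
    (leaf : Fin N → ℝ) (w : Fin N → Fin N → ℝ)
    (j : Fin N) (hj : j ≠ S.root) :
    deriv (fun t : ℝ => S.valueAt leaf w j t S.root) (S.value leaf w j)
      = ∑ k ∈ Finset.univ.filter (fun k => j ∈ S.children k),
          if S.kind k = NodeKind.sum then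
            w k j * deriv (fun t : ℝ => S.valueAt leaf w k t S.root) (S.value leaf w k)
          else if S.kind k = NodeKind.prod then
            deriv (fun t : ℝ => S.valueAt leaf w k t S.root) (S.value leaf w k)
              * ∏ j' ∈ (S.children k).erase j, S.value leaf w j'
          else 0 := by
  have h := congrFun (congrFun
    (S.derivMatrix_eq_one_add_mul_localJacobian (leaf := leaf) (w := w)) S.root) j
  rw [Matrix.add_apply, Matrix.one_apply_ne hj.symm, zero_add, Matrix.mul_apply] at h
  rw [Finset.sum_filter]
  refine h.trans (Finset.sum_congr rfl fun k _ => ?_)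
  by_cases hjk : j ∈ S.children k
  · cases hk : S.kind k <;> simp [localJacobian, derivMatrix, hjk, hk, mul_comm]
  · simp [localJacobian, hjk]

/-- Chain rule for top-down differentiation in a DAG sum-product circuit:
for any non-root node `j` of a decomposable circuit,
`D_j := ∂V_root/∂V_j = Σ_{k ∈ parents(j)} (w_{k,j} D_k` if `k` is a sum node,
`D_k ∏_{j' ∈ Ch(k), j' ≠ j} V_{j'}` if `k` is a product node`)`,
where `D_k = ∂V_root/∂V_k` is formalized by overriding node `k`'s value with a free
variable. -/
theorem SPN.backprop_chain_rule {N n : ℕ} (S : SPN N n)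
    (hD : S.Decomposable)
    (leaf : Fin N → ℝ) (w : Fin N → Fin N → ℝ)
    (j : Fin N) (hj : j ≠ S.root) :
    deriv (fun t : ℝ => S.valueAt leaf w j t S.root) (S.value leaf w j)
      = ∑ k ∈ Finset.univ.filter (fun k => j ∈ S.children k),
          if S.kind k = NodeKind.sum then
            w k j * deriv (fun t : ℝ => S.valueAt leaf w k t S.root) (S.value leaf w k)
          else if S.kind k = NodeKind.prod then
            deriv (fun t : ℝ => S.valueAt leaf w k t S.root) (S.value leaf w k)
              * ∏ j' ∈ (S.children k).erase j, S.value leaf w j'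
          else 0 :=
  SPN.backprop_chain_rule_general S leaf w j hj
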